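/- arXiv:1306.5433 — 2 statements merged into one kernel-verified Lean document; each statement's English description precedes it below -/
import Mathlib

section
/- Let g : [0,∞) → [0,∞] be decreasing with 0 < g < ∞ on (0,∞), and suppose there exist C > 0, α > 0, r₀ ∈ (0,∞] such that g(γ r) ≤ C γ^{α-d} g(r) for all 0 < γ < 1 and 0 < r < r₀ (with d ≥ 1). Then for all 0 < r < r₀ one has d ∫₀^r s^{d-1} g(s) ds ≤ (d/α) C r^d g(r). -/
open Set MeasureTheory

theorem stmt1 (d : ℕ) (hd : 1 ≤ d) (g : ℝ → ENNReal)
    (hg_anti : ∀ s t : ℝ, 0 ≤ s → s ≤ t → g t ≤ g s)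
    (hg_pos : ∀ r : ℝ, 0 < r → 0 < g r)
    (hg_fin : ∀ r : ℝ, 0 < r → g r < ⊤)
    (C α : ℝ) (hC : 0 < C) (hα : 0 < α)
    (r₀ : ENNReal) (hr₀ : 0 < r₀)
    (hscale : ∀ γ r : ℝ, 0 < γ → γ < 1 → 0 < r → (ENNReal.ofReal r) < r₀ →
      g (γ * r) ≤ ENNReal.ofReal (C * γ ^ (α - d)) * g r) :
    ∀ r : ℝ, 0 < r → (ENNReal.ofReal r) < r₀ →
      (d : ENNReal) * ∫⁻ s in Set.Ioo (0 : ℝ) r, ENNReal.ofReal (s ^ ((d : ℝ) - 1)) * g s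
        ≤ ENNReal.ofReal ((d / α) * C * r ^ (d : ℕ)) * g r := by
  intro r hr hrlt
  have hrne : r ≠ 0 := ne_of_gt hr
  -- pointwise bound
  have key : ∀ s ∈ Ioo (0 : ℝ) r,
      ENNReal.ofReal (s ^ ((d : ℝ) - 1)) * g s
        ≤ (ENNReal.ofReal (C * r ^ ((d : ℝ) - α)) * g r) * ENNReal.ofReal (s ^ (α - 1)) := by
    intro s hs
    obtain ⟨hs0, hsr⟩ := hs
    have hγ : 0 < s / r := div_pos hs0 hr
    have hγ1 : s / r < 1 := (div_lt_one hr).2 hsr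
    have h1 : g s ≤ ENNReal.ofReal (C * (s / r) ^ (α - (d : ℝ))) * g r := by
      have := hscale (s / r) r hγ hγ1 hr hrlt
      rwa [div_mul_cancel₀ s hrne] at this
    have h2 : (s / r) ^ (α - (d : ℝ)) = s ^ (α - (d : ℝ)) * r ^ ((d : ℝ) - α) := by
      rw [Real.div_rpow hs0.le hr.le, div_eq_mul_inv, ← Real.rpow_neg hr.le, neg_sub]
    have h3 : s ^ ((d : ℝ) - 1) * s ^ (α - (d : ℝ)) = s ^ (α - 1) := by
      rw [← Real.rpow_add hs0]; congr 1; ring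
    have hre : s ^ ((d : ℝ) - 1) * (C * (s / r) ^ (α - (d : ℝ)))
        = (C * r ^ ((d : ℝ) - α)) * s ^ (α - 1) := by
      rw [h2, ← h3]; ring
    calc ENNReal.ofReal (s ^ ((d : ℝ) - 1)) * g s
        ≤ ENNReal.ofReal (s ^ ((d : ℝ) - 1)) *
            (ENNReal.ofReal (C * (s / r) ^ (α - (d : ℝ))) * g r) := mul_le_mul_right h1 _
      _ = ENNReal.ofReal (s ^ ((d : ℝ) - 1) * (C * (s / r) ^ (α - (d : ℝ)))) * g r := by
          rw [ENNReal.ofReal_mul (Real.rpow_nonneg hs0.le _), mul_assoc]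
      _ = ENNReal.ofReal ((C * r ^ ((d : ℝ) - α)) * s ^ (α - 1)) * g r := by rw [hre]
      _ = (ENNReal.ofReal (C * r ^ ((d : ℝ) - α)) * g r) * ENNReal.ofReal (s ^ (α - 1)) := by
          rw [ENNReal.ofReal_mul (by positivity)]; ring
  -- value of the power integral
  have hI : ∫⁻ s in Ioo (0 : ℝ) r, ENNReal.ofReal (s ^ (α - 1)) = ENNReal.ofReal (r ^ α / α) := by
    have hint : IntegrableOn (fun s : ℝ => s ^ (α - 1)) (Ioo 0 r) := by
      have : IntervalIntegrable (fun s : ℝ => s ^ (α - 1)) volume 0 r :=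
        intervalIntegral.intervalIntegrable_rpow' (by linarith)
      rw [intervalIntegrable_iff_integrableOn_Ioc_of_le hr.le] at this
      exact this.mono_set Ioo_subset_Ioc_self
    have hnn : 0 ≤ᵐ[volume.restrict (Ioo (0 : ℝ) r)] fun s : ℝ => s ^ (α - 1) :=
      (ae_restrict_iff' measurableSet_Ioo).2
        (Filter.Eventually.of_forall fun s hs => Real.rpow_nonneg hs.1.le _)
    rw [← ofReal_integral_eq_lintegral_ofReal hint hnn]
    congr 1
    rw [← integral_Ioc_eq_integral_Ioo, ← intervalIntegral.integral_of_le hr.le,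
      integral_rpow (Or.inl (by linarith))]
    have he : α - 1 + 1 = α := by ring
    rw [he, Real.zero_rpow hα.ne']
    ring
  have hmeas : Measurable fun s : ℝ =>
      (ENNReal.ofReal (C * r ^ ((d : ℝ) - α)) * g r) * ENNReal.ofReal (s ^ (α - 1)) := by
    fun_prop
  have hle := setLIntegral_mono (μ := volume) hmeas key
  rw [lintegral_const_mul' _ _ (by
      exact ENNReal.mul_ne_top ENNReal.ofReal_ne_top (hg_fin r hr).ne), hI] at hle
  have hpow : r ^ ((d : ℝ) - α) * r ^ α = r ^ (d : ℕ) := by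
    rw [← Real.rpow_add hr, sub_add_cancel, Real.rpow_natCast]
  have hre2 : (d : ℝ) * ((C * r ^ ((d : ℝ) - α)) * (r ^ α / α)) = (d / α) * C * r ^ (d : ℕ) := by
    rw [← hpow]; field_simp
  have heq : (d : ENNReal) * ((ENNReal.ofReal (C * r ^ ((d : ℝ) - α)) * g r)
      * ENNReal.ofReal (r ^ α / α)) = ENNReal.ofReal ((d / α) * C * r ^ (d : ℕ)) * g r := by
    rw [← hre2, ENNReal.ofReal_mul (show (0:ℝ) ≤ (d:ℝ) by positivity), ENNReal.ofReal_natCast,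
      ENNReal.ofReal_mul (show (0:ℝ) ≤ C * r ^ ((d : ℝ) - α) by positivity)]
    ring
  rw [← heq]
  exact mul_le_mul_right hle _
end

section
/- Let X be a set and let W be a set of functions u : X → [0,∞] such that for every u ∈ W and constant c ≥ 0, u + c ∈ W and (if u ≥ c everywhere) u − c ∈ W, and such that λu ∈ W for λ ≥ 0. For A ⊆ X define R_1^A := inf{u ∈ W : u ≥ 1 on A} (pointwise infimum). If γ := inf_{x∈X} R_1^A(x), then R_1^A = R_{1-γ}^A + γ pointwise, where R_{1-γ}^A := inf{u ∈ W : u ≥ 1−γ on A}. Consequently, if additionally R_{1-γ}^A = (1−γ)R_1^A, then γ·R_1^A = γ, so either γ = 0 or R_1^A ≡ 1. -/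
open Set

theorem stmt6 (X : Type*) (W : Set (X → ENNReal))
    (hadd : ∀ u ∈ W, ∀ c : ENNReal, (fun x => u x + c) ∈ W)
    (hsub : ∀ u ∈ W, ∀ c : ENNReal, (∀ x, c ≤ u x) → (fun x => u x - c) ∈ W)
    (hsmul : ∀ u ∈ W, ∀ c : ENNReal, (fun x => c * u x) ∈ W)
    (A : Set X)
    -- the reduced function `R_f^A` for the constant function `f ≡ κ`:
    (R : ENNReal → X → ENNReal)
    (hR : ∀ κ : ENNReal, ∀ x : X,
      R κ x = ⨅ (u : X → ENNReal) (_ : u ∈ W) (_ : ∀ y ∈ A, κ ≤ u y), u x)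
    (γ : ENNReal) (hγ : γ = ⨅ x : X, R 1 x) :
    (∀ x : X, R 1 x = R (1 - γ) x + γ) ∧
    ((∀ x : X, R (1 - γ) x = (1 - γ) * R 1 x) →
      γ = 0 ∨ ∀ x : X, R 1 x = 1) := by
  have hγle : ∀ x : X, γ ≤ R 1 x := fun x => hγ ▸ iInf_le _ x
  have h1 : ∀ x : X, R 1 x = R (1 - γ) x + γ := by
    intro x
    apply le_antisymm
    · have step : R 1 x ≤ ⨅ (u : X → ENNReal) (_ : u ∈ W)
          (_ : ∀ y ∈ A, 1 - γ ≤ u y), (u x + γ) := by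
        refine le_iInf fun u => le_iInf fun hu => le_iInf fun hA => ?_
        rw [hR]
        refine iInf_le_of_le (fun y => u y + γ)
          (iInf_le_of_le (hadd u hu γ) (iInf_le_of_le ?_ le_rfl))
        intro y hy
        calc (1 : ENNReal) ≤ 1 - γ + γ := le_tsub_add
          _ ≤ u y + γ := add_le_add_left (hA y hy) γ
      calc R 1 x ≤ _ := step
        _ = R (1 - γ) x + γ := by
            rw [hR]; simp only [ENNReal.iInf_add]
    · rw [hR 1 x]
      refine le_iInf fun u => le_iInf fun hu => le_iInf fun hA => ?_
      have hγu : ∀ z : X, γ ≤ u z := by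
        intro z
        refine (hγle z).trans ?_
        rw [hR]
        exact iInf_le_of_le u (iInf_le_of_le hu (iInf_le_of_le hA le_rfl))
      have hmem := hsub u hu γ hγu
      have hge : ∀ y ∈ A, 1 - γ ≤ u y - γ :=
        fun y hy => tsub_le_tsub_right (hA y hy) γ
      have hRle : R (1 - γ) x ≤ u x - γ := by
        rw [hR]
        exact iInf_le_of_le (fun z => u z - γ) (iInf_le_of_le hmem (iInf_le_of_le hge le_rfl))
      calc R (1 - γ) x + γ ≤ (u x - γ) + γ := add_le_add_left hRle γ
        _ = u x := tsub_add_cancel_of_le (hγu x)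
  refine ⟨h1, fun h => ?_⟩
  rcases isEmpty_or_nonempty X with hX | hX
  · exact Or.inr fun x => (IsEmpty.false x).elim
  obtain ⟨x0⟩ := hX
  rcases W.eq_empty_or_nonempty with hW | ⟨u0, hu0⟩
  · -- W empty : everything is ⊤, contradiction with hypothesis h
    exfalso
    have hRtop : ∀ κ : ENNReal, ∀ x : X, R κ x = ⊤ := by
      intro κ x
      rw [hR]
      exact iInf_eq_top.2 fun u => iInf_eq_top.2 fun hu => absurd hu (by simp [hW])
    have hγtop : γ = ⊤ := by
      rw [hγ]
      exact iInf_eq_top.2 fun x => hRtop 1 x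
    have := h x0
    rw [hRtop _ x0, hRtop 1 x0, hγtop, ENNReal.sub_top, zero_mul] at this
    exact ENNReal.top_ne_zero this
  · -- W nonempty : all constants are in W
    have hconst : ∀ c : ENNReal, (fun _ : X => c) ∈ W := by
      intro c
      have h0 : (fun x => (0 : ENNReal) * u0 x) ∈ W := hsmul u0 hu0 0
      simpa using hadd _ h0 c
    have hR1le : ∀ x : X, R 1 x ≤ 1 := by
      intro x
      rw [hR]
      exact iInf_le_of_le (fun _ => 1)
        (iInf_le_of_le (hconst 1) (iInf_le_of_le (fun y _ => le_rfl) le_rfl))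
    have hγ1 : γ ≤ 1 := (hγle x0).trans (hR1le x0)
    by_cases hγ0 : γ = 0
    · exact Or.inl hγ0
    · refine Or.inr fun x => ?_
      have ht : R 1 x ≤ 1 := hR1le x
      have htne : R 1 x ≠ ⊤ := (ht.trans_lt (by norm_num)).ne
      have heq : R 1 x = (1 - γ) * R 1 x + γ := by
        have := h1 x; rw [h x] at this; exact this
      have hdist : (1 - γ) * R 1 x + γ * R 1 x = R 1 x := by
        rw [← add_mul, tsub_add_cancel_of_le hγ1, one_mul]
      have hfin : (1 - γ) * R 1 x ≠ ⊤ :=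
        ENNReal.mul_ne_top (by simp [ENNReal.sub_ne_top]) htne
      have hcancel : γ * R 1 x = γ := by
        have : (1 - γ) * R 1 x + γ * R 1 x = (1 - γ) * R 1 x + γ := by
          rw [hdist]; exact heq
        exact (ENNReal.add_right_inj hfin).1 this
      have hγtop : γ ≠ ⊤ := (hγ1.trans_lt (by norm_num)).ne
      have : γ * R 1 x = γ * 1 := by rw [hcancel, mul_one]
      exact (ENNReal.mul_right_inj hγ0 hγtop).1 this
end
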